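/- arXiv:1809.05799 — 7 statements merged into one kernel-verified Lean document; each statement's English description precedes it below -/
import Mathlib

section
/- Let K be a compact Hausdorff extremally disconnected space, and for each n let Aₙ⁰ and Aₙ¹ be compact P-sets in K such that for all m, n, Aₘ⁰ ∩ Aₙ¹ = ∅. Then the closures of A⁰ = ⋃ₙ Aₙ⁰ and A¹ = ⋃ₙ Aₙ¹ are disjoint. -/
open Set Topology

/-- A set `L` is a P-set if every Gδ-set containing `L` is a neighbourhood of `L`. -/
def IsPSet {Y : Type*} [TopologicalSpace Y] (L : Set Y) : Prop :=
  ∀ G : Set Y, IsGδ G → L ⊆ G → L ⊆ interior G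

section Aux

variable {K : Type*} [TopologicalSpace K] [CompactSpace K] [T2Space K]
  [ExtremallyDisconnected K]

/-- Disjoint compact sets can be separated by a clopen set. -/
lemma clopen_sep {s t : Set K} (hs : IsCompact s) (ht : IsCompact t) (hd : Disjoint s t) :
    ∃ C : Set K, IsClopen C ∧ s ⊆ C ∧ Disjoint C t := by
  obtain ⟨U, V, hU, hV, hsU, htV, hUV⟩ := SeparatedNhds.of_isCompact_isCompact hs ht hd
  exact ⟨closure U, ⟨isClosed_closure, ExtremallyDisconnected.open_closure U hU⟩,
    hsU.trans subset_closure, ((hUV.closure_left hV).mono_right htV)⟩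

/-- A compact P-set disjoint from countably many compact sets admits a clopen
neighbourhood disjoint from all of them. -/
lemma clopen_sep_countable {F : Set K} (hFc : IsCompact F) (hFp : IsPSet F)
    (L : ℕ → Set K) (hLc : ∀ m, IsCompact (L m)) (hdis : ∀ m, Disjoint F (L m)) :
    ∃ C : Set K, IsClopen C ∧ F ⊆ C ∧ ∀ m, Disjoint C (L m) := by
  choose E hEclopen hLE hEF using fun m => clopen_sep (hLc m) hFc (hdis m).symm
  set G : Set K := ⋂ m, (E m)ᶜ with hG
  have hGδ : IsGδ G := .iInter fun m => ((hEclopen m).1.isOpen_compl).isGδ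
  have hFG : F ⊆ G := subset_iInter fun m => Set.subset_compl_iff_disjoint_left.mpr (hEF m)
  have hFV : F ⊆ interior G := hFp G hGδ hFG
  refine ⟨closure (interior G), ⟨isClosed_closure,
      ExtremallyDisconnected.open_closure _ isOpen_interior⟩,
    hFV.trans subset_closure, fun m => ?_⟩
  have h1 : Disjoint (interior G) (E m) := by
    refine Set.disjoint_left.mpr fun x hx hxE => ?_
    have : x ∈ G := interior_subset hx
    exact (mem_iInter.mp this m) hxE
  exact (h1.closure_left (hEclopen m).2).mono_right (hLE m)

end Aux

theorem disjoint_closures_of_unions_of_psets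
    {K : Type*} [TopologicalSpace K] [CompactSpace K] [T2Space K]
    [ExtremallyDisconnected K]
    (A0 A1 : ℕ → Set K)
    (h0c : ∀ n, IsCompact (A0 n)) (h0p : ∀ n, IsPSet (A0 n))
    (h1c : ∀ n, IsCompact (A1 n)) (h1p : ∀ n, IsPSet (A1 n))
    (hd : ∀ m n, A0 m ∩ A1 n = ∅) :
    closure (⋃ n, A0 n) ∩ closure (⋃ n, A1 n) = ∅ := by
  have hd' : ∀ m n, Disjoint (A0 m) (A1 n) := fun m n =>
    Set.disjoint_iff_inter_eq_empty.mpr (hd m n)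
  -- clopen sets C n ⊇ A0 n disjoint from every A1 m
  choose C hCclopen hA0C hCdis using fun n =>
    clopen_sep_countable (h0c n) (h0p n) A1 h1c (hd' n)
  -- clopen sets W m ⊇ A1 m disjoint from every C n
  choose W hWclopen hA1W hWdis using fun m =>
    clopen_sep_countable (h1c m) (h1p m) C
      (fun n => (hCclopen n).1.isCompact) (fun n => (hCdis n m).symm)
  -- the unions give disjoint open sets
  set V : Set K := ⋃ n, C n with hV
  set U : Set K := ⋃ m, W m with hU
  have hVopen : IsOpen V := isOpen_iUnion fun n => (hCclopen n).2
  have hUopen : IsOpen U := isOpen_iUnion fun m => (hWclopen m).2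
  have hVU : Disjoint V U := by
    rw [hV, hU, Set.disjoint_iUnion_left]
    intro n
    rw [Set.disjoint_iUnion_right]
    intro m
    exact (hWdis m n).symm
  have h1 : Disjoint (closure V) U := hVU.closure_left hUopen
  have h2 : Disjoint (closure V) (closure U) :=
    (h1.symm.closure_left (ExtremallyDisconnected.open_closure V hVopen)).symm
  have hA0V : (⋃ n, A0 n) ⊆ V := Set.iUnion_mono hA0C
  have hA1U : (⋃ m, A1 m) ⊆ U := Set.iUnion_mono hA1W
  exact Set.disjoint_iff_inter_eq_empty.mp
    (h2.mono (closure_mono hA0V) (closure_mono hA1U))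
end

section
/- Let K be a compact Hausdorff space, L ⊆ K a compact P-set, and μ a regular Borel (Radon) measure on K. Then there is an open neighbourhood U of L with μ(U \ L) = 0. -/
/-! Outer regularity gives open sets `Uₙ ⊇ L` with `μ (Uₙ \ L) < 1 / n`; their intersection is a
Gδ-set `G ⊇ L` with `μ (G \ L) = 0`. Since `L` is a P-set, `interior G` is already a neighbourhood
of `L`, and it is the required open set. -/

open MeasureTheory
open scoped ENNReal

theorem MeasurableSet.exists_isGδ_superset_measure_sdiff_eq_zero {α : Type*}
    [TopologicalSpace α] [MeasurableSpace α] {μ : Measure α} [μ.OuterRegular]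
    {A : Set α} (hA : MeasurableSet A) (hA' : μ A ≠ ∞) :
    ∃ G, A ⊆ G ∧ IsGδ G ∧ μ (G \ A) = 0 := by
  have hU (n : ℕ) : ∃ U, U ⊇ A ∧ IsOpen U ∧ μ U < ∞ ∧ μ (U \ A) < (n : ℝ≥0∞)⁻¹ :=
    hA.exists_isOpen_sdiff_lt hA' (ENNReal.inv_ne_zero.2 (ENNReal.natCast_ne_top n))
  choose U hAU hUo _ hUA using hU
  refine ⟨⋂ n, U n, Set.subset_iInter hAU, .iInter_of_isOpen hUo, ?_⟩
  by_contra hpos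
  obtain ⟨n, hn⟩ := ENNReal.exists_inv_nat_lt hpos
  have hle : μ ((⋂ n, U n) \ A) ≤ μ (U n \ A) :=
    measure_mono (Set.sdiff_subset_sdiff_left (Set.iInter_subset U n))
  exact (hn.trans_le hle).not_gt (hUA n)

theorem IsPSet.exists_isOpen_superset_measure_sdiff_eq_zero {α : Type*}
    [TopologicalSpace α] [MeasurableSpace α] {μ : Measure α} [μ.OuterRegular]
    {L : Set α} (hP : IsPSet L) (hL : MeasurableSet L) (hL' : μ L ≠ ∞) :
    ∃ U, IsOpen U ∧ L ⊆ U ∧ μ (U \ L) = 0 := by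
  obtain ⟨G, hLG, hG, hGL⟩ := hL.exists_isGδ_superset_measure_sdiff_eq_zero hL'
  exact ⟨interior G, isOpen_interior, hP G hG hLG,
    measure_mono_null (Set.sdiff_subset_sdiff_left interior_subset) hGL⟩

theorem pset_has_null_frontier_neighbourhood_general
    {K : Type*} [TopologicalSpace K] [T2Space K]
    [MeasurableSpace K] [BorelSpace K]
    {L : Set K} (hLc : IsCompact L) (hP : IsPSet L)
    (μ : Measure K) [μ.Regular] :
    ∃ U : Set K, IsOpen U ∧ L ⊆ U ∧ μ (U \ L) = 0 :=
  hP.exists_isOpen_superset_measure_sdiff_eq_zero hLc.isClosed.measurableSet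
    hLc.measure_lt_top.ne

theorem pset_has_null_frontier_neighbourhood
    {K : Type*} [TopologicalSpace K] [CompactSpace K] [T2Space K]
    [MeasurableSpace K] [BorelSpace K]
    {L : Set K} (hLc : IsCompact L) (hP : IsPSet L)
    (μ : Measure K) [IsFiniteMeasure μ] [μ.Regular] :
    ∃ U : Set K, IsOpen U ∧ L ⊆ U ∧ μ (U \ L) = 0 :=
  pset_has_null_frontier_neighbourhood_general hLc hP μ
end

section
/- In the space X of nondecreasing functions from ω₂ to ω₁ + 1 (subspace of (ω₁+1)^{ω₂}), for each α < ω₂ the set A_α = { x ∈ X : x(α) = ω₁ } is a closed P-set in X. -/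
open Ordinal Cardinal

noncomputable section

def omega1 : Ordinal := (aleph 1).ord
def omega2 : Ordinal := (aleph 2).ord

abbrev Idx := {β : Ordinal // β < omega2}
abbrev Val := {γ : Ordinal // γ ≤ omega1}

instance : TopologicalSpace Val := Preorder.topology Val
instance : OrderTopology Val := ⟨rfl⟩

/-- The Kunen–van Mill–Mills space: nondecreasing functions from ω₂ to ω₁ + 1. -/
def KvMM : Set (Idx → Val) := {x | ∀ a b : Idx, a ≤ b → x a ≤ x b}

/-- The top value ω₁ of the value space. -/
def wTop : Val := ⟨omega1, le_rfl⟩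

/-- `A_α = { x ∈ X : x(α) = ω₁ }`, as a subset of the subspace `X = KvMM`. -/
def Aα (α : Idx) : Set KvMM := {x | (x : Idx → Val) α = wTop}


/-! Evaluation at `α` is a continuous map from the compact space `X` to `ω₁ + 1`, and `A_α` is
the preimage of the top point. By compactness, every open set containing `A_α` contains a tail
`{x | δ < x α}` with `δ < ω₁`. Given countably many open sets, the countably many `δ` are bounded
below `ω₁` by uncountable cofinality, and the tail above that bound is an open neighbourhood of
`A_α` inside their intersection. -/

open Set Order

/-- For an ordinal `t` this says `ℵ₀ < t.cof`. -/
def HasUncountableCof {L : Type*} [LinearOrder L] (t : L) : Prop :=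
  ∀ s : Set L, s.Countable → s ⊆ Iio t → ∃ ε < t, s ⊆ Iio ε

lemma HasUncountableCof.isSuccLimit {L : Type*} [LinearOrder L] {t : L}
    (ht : HasUncountableCof t) : IsSuccLimit t := by
  obtain ⟨ε, hεt, -⟩ := ht ∅ countable_empty (empty_subset _)
  refine ⟨not_isMin_of_lt hεt, fun b hbt => ?_⟩
  obtain ⟨ε, hεt, hbε⟩ := ht {b} (countable_singleton b) (singleton_subset_iff.mpr hbt.lt)
  exact hbt.2 (hbε rfl) hεt

section CompactPreimage

variable {K L : Type*} [TopologicalSpace K] [CompactSpace K] [LinearOrder L] [TopologicalSpace L]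
  {f : K → L} {t : L}

lemma exists_preimage_Ioi_subset [ClosedIciTopology L] (hf : Continuous f) (ht : IsSuccLimit t)
    {U : Set K} (hU : IsOpen U) (hsub : f ⁻¹' Ici t ⊆ U) : ∃ δ < t, f ⁻¹' Ioi δ ⊆ U := by
  obtain ⟨b, hbt⟩ := not_isMin_iff.mp ht.not_isMin
  have : Nonempty (Iio t) := ⟨⟨b, hbt⟩⟩
  let V : Iio t → Set K := fun δ => f ⁻¹' Ici δ.1
  have hV_anti : Antitone V := fun δ₁ δ₂ h x hx => le_trans h hx
  have hV_closed : ∀ δ, IsClosed (V δ) := fun δ => isClosed_Ici.preimage hf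
  have hV_inter : ⋂ δ, V δ ⊆ f ⁻¹' Ici t := by
    intro x hx
    by_contra hxt
    obtain ⟨c, hct, hxc⟩ := ht.isSuccPrelimit.lt_iff_exists_lt.mp (not_le.mp hxt)
    exact (mem_iInter.mp hx ⟨c, hct⟩ : c ≤ f x).not_gt hxc
  obtain ⟨δ, hδU⟩ := exists_subset_nhds_of_isCompact' hV_anti.directed_ge
    (fun δ => (hV_closed δ).isCompact) hV_closed
    fun x hx => hU.mem_nhds (hsub (hV_inter hx))
  exact ⟨δ, δ.2, fun x hx => hδU hx.le⟩

lemma isPSet_preimage_Ici [OrderClosedTopology L] (hf : Continuous f) (ht : HasUncountableCof t) :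
    IsPSet (f ⁻¹' Ici t) := by
  rintro _ ⟨T, hT_open, hT_countable, rfl⟩ hsub
  have : Nonempty L := ⟨t⟩
  choose! δ hδt hδU using fun U hU => exists_preimage_Ioi_subset hf ht.isSuccLimit
    (hT_open U hU) (hsub.trans (sInter_subset_of_mem hU))
  obtain ⟨ε, hεt, hδε⟩ := ht (δ '' T) (hT_countable.image δ) (image_subset_iff.mpr hδt)
  have hε_sub : f ⁻¹' Ioi ε ⊆ ⋂₀ T := fun x hx U hU =>
    hδU U hU ((hδε (mem_image_of_mem δ hU)).trans hx)
  exact fun x hx => interior_maximal hε_sub (isOpen_Ioi.preimage hf) (hεt.trans_le hx)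

end CompactPreimage

instance : BoundedOrder Val := inferInstanceAs (BoundedOrder (Iic omega1))

instance : ConditionallyCompleteLinearOrder Val :=
  have : Inhabited (Iic omega1) := ⟨⊥⟩
  inferInstanceAs (ConditionallyCompleteLinearOrder (Iic omega1))

instance : CompactSpace Val := ⟨Icc_bot_top (α := Val) ▸ isCompact_Icc⟩

instance : CompactSpace KvMM := isCompact_iff_compactSpace.mp isClosed_monotone.isCompact

lemma omega1_eq : omega1 = ω₁ := ord_aleph 1

lemma hasUncountableCof_wTop : HasUncountableCof wTop := by
  intro s hs hst
  have : Countable s := hs.to_subtype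
  have hlt : ∀ x : s, x.1.1 + 1 < ω₁ := fun x =>
    (isSuccLimit_omega 1).add_one_lt ((show x.1.1 < omega1 from hst x.2).trans_eq omega1_eq)
  have hsup : ⨆ x : s, (x.1.1 + 1) < omega1 := (iSup_lt_omega_one hlt).trans_eq omega1_eq.symm
  refine ⟨⟨_, hsup.le⟩, hsup, fun x hx => ?_⟩
  exact (lt_add_one x.1).trans_le (Ordinal.le_iSup (fun x : s => x.1.1 + 1) ⟨x, hx⟩)

lemma Aα_eq_preimage_Ici (α : Idx) : Aα α = (fun x : KvMM => (x : Idx → Val) α) ⁻¹' Ici wTop :=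
  ext fun _ => top_le_iff.symm

lemma continuous_eval_KvMM (α : Idx) : Continuous fun x : KvMM => (x : Idx → Val) α :=
  (continuous_apply α).comp continuous_subtype_val

lemma isClosed_Aα (α : Idx) : IsClosed (Aα α) :=
  Aα_eq_preimage_Ici α ▸ isClosed_Ici.preimage (continuous_eval_KvMM α)

lemma isPSet_Aα (α : Idx) : IsPSet (Aα α) :=
  Aα_eq_preimage_Ici α ▸ isPSet_preimage_Ici (continuous_eval_KvMM α) hasUncountableCof_wTop

theorem Aα_isClosed_pset (α : Idx) : IsClosed (Aα α) ∧ IsPSet (Aα α) :=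
  ⟨isClosed_Aα α, isPSet_Aα α⟩

end
end

section
/- In the space X of nondecreasing functions from ω₂ to ω₁ + 1, for each ξ < ω₁ the set A^ξ = { x ∈ X : x(β) ≤ ξ for all β < ω₂ } is a closed nowhere dense P-set in X. -/
open Ordinal Cardinal

noncomputable section

/-- `A^ξ = { x ∈ X : x(β) ≤ ξ for all β }`, as a subset of `X = KvMM`. -/
def Aup (ξ : Ordinal) (hξ : ξ < omega1) : Set KvMM :=
  {x | ∀ β : Idx, (x : Idx → Val) β ≤ ⟨ξ, hξ.le⟩}


/-!
`X` is compact, being closed in a power of the compact well-order `ω₁ + 1`, and `A^ξ` is the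
intersection of the clopen sets `{y : y δ ≤ ξ}`, which shrink as `δ` grows. By compactness they
form a neighbourhood base of `A^ξ`, and since `cof ω₂ > ℵ₀` any countably many of them contain a
single one: so `A^ξ` is a P-set. It is nowhere dense because every `x ∈ X` is the limit of its
truncations, equal to `x` up to `s` and to `ω₁` beyond, none of which lies in `A^ξ`.
-/

open Filter Topology Set

theorem WellFoundedLT.compactSpace {α : Type*} [LinearOrder α] [WellFoundedLT α] [OrderTop α]
    [TopologicalSpace α] [OrderTopology α] : CompactSpace α := by
  let := WellFoundedLT.toOrderBot α
  let := WellFoundedLT.conditionallyCompleteLinearOrderBot α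
  have hIcc : Icc (⊥ : α) ⊤ = Set.univ := eq_univ_of_forall fun a => ⟨bot_le, le_top⟩
  exact ⟨hIcc ▸ isCompact_Icc⟩

theorem hasBasis_nhdsSet_iInter_of_isClopen {X ι : Type*} [TopologicalSpace X] [CompactSpace X]
    [Preorder ι] [IsDirectedOrder ι] [Nonempty ι] {C : ι → Set X} (hC : ∀ i, IsClopen (C i))
    (hCanti : Antitone C) : (𝓝ˢ (⋂ i, C i)).HasBasis (fun _ => True) C := by
  refine ⟨fun t => ⟨fun ht => ?_, fun ⟨i, _, hit⟩ => ?_⟩⟩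
  · rw [← subset_interior_iff_mem_nhdsSet] at ht
    have hdisj : (interior t)ᶜ ∩ ⋂ i, C i = ∅ :=
      eq_empty_of_forall_notMem fun x ⟨hx, hxC⟩ => hx (ht hxC)
    obtain ⟨i, hi⟩ := isOpen_interior.isClosed_compl.isCompact.elim_directed_family_closed C
      (fun i => (hC i).isClosed) hdisj hCanti.directed_ge
    exact ⟨i, trivial, fun x hx => interior_subset (by_contra fun h => hi.subset ⟨h, hx⟩)⟩
  · exact mem_of_superset ((hC i).isOpen.mem_nhdsSet.2 (iInter_subset C i)) hit

theorem Filter.HasBasis.countableInterFilter {α ι : Type*} [Preorder ι] {l : Filter α}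
    {s : ι → Set α} (hl : l.HasBasis (fun _ => True) s) (hs : Antitone s)
    (hι : ∀ S : Set ι, S.Countable → BddAbove S) : CountableInterFilter l := by
  refine ⟨fun S hSc hS => ?_⟩
  choose i hi using fun t : S => hl.mem_iff.1 (hS t t.2)
  have := hSc.to_subtype
  obtain ⟨j, hj⟩ := hι _ (countable_range i)
  exact hl.mem_iff.2 ⟨j, trivial, subset_sInter fun t ht =>
    (hs (hj (mem_range_self ⟨t, ht⟩))).trans (hi ⟨t, ht⟩).2⟩

theorem IsPSet.of_countableInterFilter {Y : Type*} [TopologicalSpace Y] {A : Set Y}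
    [CountableInterFilter (𝓝ˢ A)] : IsPSet A := by
  rintro _ ⟨T, hTo, hTc, rfl⟩ hAT
  rw [subset_interior_iff_mem_nhdsSet, countable_sInter_mem hTc]
  exact fun t ht => (hTo t ht).mem_nhdsSet.2 (hAT.trans (sInter_subset_of_mem ht))

open Classical in
def truncTop {ι α : Type*} [Preorder ι] [Top α] (x : ι → α) (s : ι) : ι → α :=
  fun β => if β ≤ s then x β else ⊤

section truncTop

variable {ι α : Type*} [Preorder ι] {x : ι → α}

theorem Monotone.truncTop [Preorder α] [OrderTop α] (hx : Monotone x) (s : ι) :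
    Monotone (truncTop x s) := by
  intro β γ hβγ
  by_cases hγ : γ ≤ s
  · simp only [_root_.truncTop, if_pos hγ, if_pos (hβγ.trans hγ)]
    exact hx hβγ
  · simp only [_root_.truncTop, if_neg hγ]
    exact le_top

theorem truncTop_of_not_le [Top α] {s β : ι} (h : ¬β ≤ s) : truncTop x s β = ⊤ := if_neg h

theorem tendsto_truncTop_atTop [Top α] [TopologicalSpace α] (x : ι → α) :
    Tendsto (truncTop x) atTop (𝓝 x) :=
  tendsto_pi_nhds.2 fun β => tendsto_const_nhds.congr'
    ((eventually_ge_atTop β).mono fun _ hs => (if_pos hs).symm)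

end truncTop

instance : OrderTop Val where
  top := ⟨omega1, le_rfl⟩
  le_top γ := γ.2

instance inst_s9 : CompactSpace Val := WellFoundedLT.compactSpace

instance inst_s9_2 : CompactSpace KvMM :=
  isCompact_iff_compactSpace.mp isClosed_monotone.isCompact

theorem omega1_isSuccLimit : Order.IsSuccLimit omega1 := isSuccLimit_ord (aleph0_le_aleph 1)

theorem omega2_isSuccLimit : Order.IsSuccLimit omega2 := isSuccLimit_ord (aleph0_le_aleph 2)

instance : Nonempty Idx := ⟨⟨0, omega2_isSuccLimit.bot_lt⟩⟩

instance : NoMaxOrder Idx :=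
  ⟨fun β => ⟨⟨Order.succ β.1, omega2_isSuccLimit.succ_lt β.2⟩, Order.lt_succ β.1⟩⟩

theorem cof_omega2 : omega2.cof = aleph 2 := by
  rw [omega2]
  simpa only [one_add_one_eq_two] using (isRegular_aleph_add_one 1).cof_ord

theorem Idx.bddAbove_of_countable (S : Set Idx) (hS : S.Countable) : BddAbove S := by
  rcases S.eq_empty_or_nonempty with rfl | hne
  · exact bddAbove_empty
  obtain ⟨f, rfl⟩ := hS.exists_eq_range hne
  have hcard : Cardinal.lift #ℕ < (Ordinal.lift omega2).cof := by
    rw [← lift_cof, cof_omega2, mk_nat, lift_aleph0, lift_aleph]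
    exact aleph0_lt_aleph.2 (by simp)
  refine ⟨⟨⨆ n, (f n).1, lift_iSup_lt_of_lt_cof hcard fun n => (f n).2⟩, ?_⟩
  rintro _ ⟨n, rfl⟩
  exact Ordinal.le_iSup (fun n => (f n).1) n

theorem Val.isOpen_Iic {ξ : Ordinal} (hξ : ξ < omega1) : IsOpen (Iic (⟨ξ, hξ.le⟩ : Val)) := by
  have hsucc : Order.succ ξ ≤ omega1 := (omega1_isSuccLimit.succ_lt hξ).le
  have hIic : Iic (⟨ξ, hξ.le⟩ : Val) = Iio ⟨Order.succ ξ, hsucc⟩ :=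
    ext fun γ => show γ.1 ≤ ξ ↔ γ.1 < Order.succ ξ from Order.lt_succ_iff.symm
  exact hIic ▸ isOpen_Iio

def evalLE (δ : Idx) (v : Val) : Set KvMM := {y | (y : Idx → Val) δ ≤ v}

theorem antitone_evalLE (v : Val) : Antitone (evalLE · v) :=
  fun _ _ hδ y hy => (y.2 _ _ hδ).trans hy

theorem continuous_eval (δ : Idx) : Continuous fun y : KvMM => (y : Idx → Val) δ :=
  (continuous_apply δ).comp continuous_subtype_val

theorem isClopen_evalLE (δ : Idx) {ξ : Ordinal} (hξ : ξ < omega1) :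
    IsClopen (evalLE δ ⟨ξ, hξ.le⟩) :=
  ⟨isClosed_Iic.preimage (continuous_eval δ), (Val.isOpen_Iic hξ).preimage (continuous_eval δ)⟩

theorem Aup_eq_iInter_evalLE {ξ : Ordinal} (hξ : ξ < omega1) :
    Aup ξ hξ = ⋂ δ, evalLE δ ⟨ξ, hξ.le⟩ :=
  ext fun _ => by rw [mem_iInter]; rfl

theorem dense_compl_Aup {ξ : Ordinal} (hξ : ξ < omega1) : Dense (Aup ξ hξ)ᶜ := by
  intro x
  let y : Idx → KvMM := fun s => ⟨truncTop x.1 s, Monotone.truncTop x.2 s⟩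
  refine mem_closure_of_tendsto (f := y) (tendsto_subtype_rng.2 (tendsto_truncTop_atTop x.1))
    (Eventually.of_forall fun s hs => ?_)
  obtain ⟨β, hβ⟩ := exists_gt s
  have htop : (⊤ : Val) ≤ ⟨ξ, hξ.le⟩ := (truncTop_of_not_le hβ.not_ge).symm.trans_le (hs β)
  exact hξ.not_ge htop

theorem isClosed_Aup {ξ : Ordinal} (hξ : ξ < omega1) : IsClosed (Aup ξ hξ) :=
  Aup_eq_iInter_evalLE hξ ▸ isClosed_iInter fun δ => (isClopen_evalLE δ hξ).isClosed

theorem isPSet_Aup {ξ : Ordinal} (hξ : ξ < omega1) : IsPSet (Aup ξ hξ) := by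
  have hbasis := hasBasis_nhdsSet_iInter_of_isClopen (fun δ => isClopen_evalLE δ hξ)
    (antitone_evalLE _)
  rw [← Aup_eq_iInter_evalLE hξ] at hbasis
  have := hbasis.countableInterFilter (antitone_evalLE _) Idx.bddAbove_of_countable
  exact IsPSet.of_countableInterFilter

theorem Aup_isClosed_nowhereDense_pset (ξ : Ordinal) (hξ : ξ < omega1) :
    IsClosed (Aup ξ hξ) ∧ interior (closure (Aup ξ hξ)) = ∅ ∧ IsPSet (Aup ξ hξ) := by
  refine ⟨isClosed_Aup hξ, ?_, isPSet_Aup hξ⟩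
  rw [(isClosed_Aup hξ).closure_eq, interior_eq_empty_iff_dense_compl]
  exact dense_compl_Aup hξ

end
end

section
/- With K, 𝒫, E as above, the space E = C(K,{0,1}) with the topology of uniform convergence on members of 𝒫 is a P-space: every Gδ-set in E is open. -/
/-- The topology on `E = C(K, Bool)` of uniform convergence on members of the
cover `P`: basic (sub-basic) open sets are `N(f, L) = { g : g|_L = f|_L }`. -/
def coverTopology {K : Type*} [TopologicalSpace K] (P : Set (Set K)) :
    TopologicalSpace C(K, Bool) :=
  TopologicalSpace.generateFrom
    {S | ∃ f : C(K, Bool), ∃ L ∈ P, S = {g : C(K, Bool) | ∀ x ∈ L, g x = f x}}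

open Set Topology

section CoverTopology

variable {K : Type*} [TopologicalSpace K] {P : Set (Set K)}

theorem isOpen_setOf_eqOn {L : Set K} (hL : L ∈ P) (g : C(K, Bool)) :
    IsOpen[coverTopology P] {h : C(K, Bool) | EqOn h g L} :=
  TopologicalSpace.isOpen_generateFrom_of_mem ⟨g, L, hL, rfl⟩

theorem exists_finite_subset_setOf_eqOn_subset {U : Set C(K, Bool)}
    (hU : IsOpen[coverTopology P] U) {g : C(K, Bool)} (hg : g ∈ U) :
    ∃ Q ⊆ P, Q.Finite ∧ {h : C(K, Bool) | EqOn h g (⋃₀ Q)} ⊆ U := by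
  induction hU with
  | basic s hs =>
    obtain ⟨f, L, hL, rfl⟩ := hs
    exact ⟨{L}, singleton_subset_iff.2 hL, finite_singleton L,
      fun h hh x hx => (hh (by simpa using hx)).trans (hg x hx)⟩
  | univ => exact ⟨∅, empty_subset P, finite_empty, subset_univ _⟩
  | inter s t _ _ ihs iht =>
    obtain ⟨Q₁, hQ₁P, hQ₁f, hQ₁⟩ := ihs hg.1
    obtain ⟨Q₂, hQ₂P, hQ₂f, hQ₂⟩ := iht hg.2
    exact ⟨Q₁ ∪ Q₂, union_subset hQ₁P hQ₂P, hQ₁f.union hQ₂f, fun h hh =>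
      ⟨hQ₁ (hh.mono (sUnion_mono subset_union_left)),
        hQ₂ (hh.mono (sUnion_mono subset_union_right))⟩⟩
  | sUnion S _ ih =>
    obtain ⟨s, hs, hgs⟩ := hg
    obtain ⟨Q, hQP, hQf, hQ⟩ := ih s hs hgs
    exact ⟨Q, hQP, hQf, hQ.trans (subset_sUnion_of_mem hs)⟩

theorem exists_countable_subset_setOf_eqOn_subset_of_isGδ {G : Set C(K, Bool)}
    (hG : @IsGδ C(K, Bool) (coverTopology P) G) {g : C(K, Bool)} (hg : g ∈ G) :
    ∃ Q ⊆ P, Q.Countable ∧ {h : C(K, Bool) | EqOn h g (⋃₀ Q)} ⊆ G := by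
  obtain ⟨T, hTopen, hTcount, rfl⟩ := hG
  choose! Qf hQfP hQffin hQf using fun t ht =>
    exists_finite_subset_setOf_eqOn_subset (hTopen t ht) (hg t ht)
  exact ⟨⋃ t ∈ T, Qf t, iUnion₂_subset hQfP,
    hTcount.biUnion fun t ht => (hQffin t ht).countable,
    fun h hh t ht => hQf t ht (hh.mono (sUnion_mono (subset_biUnion_of_mem ht)))⟩

end CoverTopology

theorem function_space_is_P_space_general
    {K : Type*} [TopologicalSpace K]
    (P : Set (Set K))
    (hctble : ∀ Q ⊆ P, Q.Countable → ∃ L ∈ P, ⋃₀ Q ⊆ L) :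
    ∀ G : Set C(K, Bool), @IsGδ C(K, Bool) (coverTopology P) G → @IsOpen C(K, Bool) (coverTopology P) G := by
  intro G hG
  let := coverTopology P
  refine isOpen_iff_forall_mem_open.2 fun g hg => ?_
  obtain ⟨Q, hQP, hQcount, hQG⟩ := exists_countable_subset_setOf_eqOn_subset_of_isGδ hG hg
  obtain ⟨L, hLP, hQL⟩ := hctble Q hQP hQcount
  exact ⟨{h | EqOn h g L}, fun h hh => hQG (hh.mono hQL), isOpen_setOf_eqOn hLP g,
    fun _ _ => rfl⟩

theorem function_space_is_P_space
    {K : Type*} [TopologicalSpace K] [CompactSpace K] [T2Space K]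
    [ExtremallyDisconnected K]
    (P : Set (Set K))
    (hclosed : ∀ L ∈ P, IsClosed L)
    (hnd : ∀ L ∈ P, interior (closure L) = ∅)
    (hpset : ∀ L ∈ P, IsPSet L)
    (hcover : ⋃₀ P = Set.univ)
    (hctble : ∀ Q ⊆ P, Q.Countable → ∃ L ∈ P, ⋃₀ Q ⊆ L) :
    ∀ G : Set C(K, Bool), @IsGδ C(K, Bool) (coverTopology P) G → @IsOpen C(K, Bool) (coverTopology P) G :=
  function_space_is_P_space_general P hctble
end

section
/- Let π : K → X be a continuous irreducible surjection between compact Hausdorff spaces and f : K → {0,1} continuous. Then the set { x ∈ X : π⁻¹(x) ⊆ f⁻¹(0) } is open in X; moreover it is a regular open set (equal to the interior of its closure). -/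
theorem fiber_zero_set_is_regular_open
    {K X : Type*} [TopologicalSpace K] [CompactSpace K] [T2Space K]
    [TopologicalSpace X] [CompactSpace X] [T2Space X]
    (π : K → X) (hcont : Continuous π) (hsurj : Function.Surjective π)
    (hirr : ∀ F : Set K, IsClosed F → F ≠ Set.univ → π '' F ≠ Set.univ)
    (f : K → Bool) (hf : Continuous f) :
    IsOpen {x : X | ∀ k : K, π k = x → f k = false} ∧
    {x : X | ∀ k : K, π k = x → f k = false} =
      interior (closure {x : X | ∀ k : K, π k = x → f k = false}) := by
  classical
  set V := {x : X | ∀ k : K, π k = x → f k = false} with hVdef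
  have hAcl : IsClosed (f ⁻¹' {true}) := isClosed_singleton.preimage hf
  have hAop : IsOpen (f ⁻¹' {true}) := (isOpen_discrete _).preimage hf
  have hBcl : IsClosed (f ⁻¹' {false}) := isClosed_singleton.preimage hf
  have himgA : IsClosed (π '' (f ⁻¹' {true})) :=
    (hAcl.isCompact.image hcont).isClosed
  have himgB : IsClosed (π '' (f ⁻¹' {false})) :=
    (hBcl.isCompact.image hcont).isClosed
  have hVeq : V = (π '' (f ⁻¹' {true}))ᶜ := by
    ext x
    simp only [hVdef, Set.mem_setOf_eq, Set.mem_compl_iff, Set.mem_image,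
      Set.mem_preimage, Set.mem_singleton_iff, not_exists, not_and]
    constructor
    · intro h k hk hpk
      simp [h k hpk] at hk
    · intro h k hpk
      by_contra hne
      exact h k (by simpa using hne) hpk
  have hVopen : IsOpen V := hVeq ▸ himgA.isOpen_compl
  refine ⟨hVopen, le_antisymm (interior_maximal subset_closure hVopen) ?_⟩
  intro x hx
  intro k hk
  by_contra hktrue
  have hktrue' : f k = true := by simpa using hktrue
  have hWopen : IsOpen (interior (closure V)) := isOpen_interior
  have hU : IsOpen (π ⁻¹' interior (closure V) ∩ f ⁻¹' {true}) :=
    (hWopen.preimage hcont).inter hAop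
  have hkU : k ∈ π ⁻¹' interior (closure V) ∩ f ⁻¹' {true} :=
    ⟨by simpa [hk] using hx, hktrue'⟩
  have hF : IsClosed (π ⁻¹' interior (closure V) ∩ f ⁻¹' {true})ᶜ := hU.isClosed_compl
  have hFne : (π ⁻¹' interior (closure V) ∩ f ⁻¹' {true})ᶜ ≠ Set.univ := by
    intro h
    exact (Set.eq_univ_iff_forall.mp h k) hkU
  obtain ⟨y, hy⟩ := (Set.ne_univ_iff_exists_notMem _).mp (hirr _ hF hFne)
  have hyfib : ∀ z, π z = y → z ∈ π ⁻¹' interior (closure V) ∩ f ⁻¹' {true} := by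
    intro z hz
    by_contra hzn
    exact hy ⟨z, hzn, hz⟩
  obtain ⟨z0, hz0⟩ := hsurj y
  have hyW : y ∈ interior (closure V) := by
    have := (hyfib z0 hz0).1
    simpa [hz0] using this
  have hyV' : y ∈ (π '' (f ⁻¹' {false}))ᶜ := by
    rintro ⟨z, hz, hzy⟩
    have := (hyfib z hzy).2
    simp_all
  have hdisj : (π '' (f ⁻¹' {false}))ᶜ ∩ V = ∅ := by
    ext w
    simp only [Set.mem_inter_iff, Set.mem_compl_iff, Set.mem_image, hVdef,
      Set.mem_setOf_eq, Set.mem_empty_iff_false, iff_false, not_and]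
    intro hw hwV
    obtain ⟨z, hz⟩ := hsurj w
    exact hw ⟨z, hwV z hz, hz⟩
  have hyclV : y ∈ closure V := interior_subset hyW
  have hne := mem_closure_iff.mp hyclV _ himgB.isOpen_compl hyV'
  rw [hdisj] at hne
  exact Set.not_nonempty_empty hne
end

section
/- Let K be a compact Hausdorff space, u ∈ C(K) a nonzero continuous real-valued function, E a topological space, and e : E × K → {0,1} a separately continuous function that is nonconstant on every nonempty open rectangle of E × K. Then the map t ↦ u · e(t, ·) from E to C(K) with the supremum norm has no points of continuity. -/
/-! Pick `x₀` with `u x₀ ≠ 0` and set `δ = |u x₀| / 2`. Where `|u x| > δ`, a sup-distance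
`‖u · e(t, ·) − u · e(t₀, ·)‖ < δ` forces `|e(t, x) − e(t₀, x)| < 1`, i.e. `e(t, x) = e(t₀, x)`
since `e` is `{0,1}`-valued; and the continuous `{0,1}`-valued `e(t₀, ·)` is locally constant.
So continuity at `t₀` would make `e` constant on an open rectangle around `(t₀, x₀)`. -/

open Metric Set

lemma eq_of_abs_sub_lt_one_of_zero_or_one {a b : ℝ} (ha : a = 0 ∨ a = 1) (hb : b = 0 ∨ b = 1)
    (h : |a - b| < 1) : a = b := by
  rcases ha with rfl | rfl <;> rcases hb with rfl | rfl <;> norm_num at h <;> rfl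

lemma isOpen_setOf_eq_of_zero_or_one {X : Type*} [TopologicalSpace X] {f : X → ℝ}
    (hf : Continuous f) (h01 : ∀ x, f x = 0 ∨ f x = 1) (x₀ : X) :
    IsOpen {x | f x = f x₀} := by
  convert isOpen_ball.preimage hf using 1
  ext x
  simp only [mem_ofPred_eq, mem_preimage, mem_ball, Real.dist_eq]
  exact ⟨fun h => by simp [h], eq_of_abs_sub_lt_one_of_zero_or_one (h01 x) (h01 x₀)⟩

lemma exists_open_rectangle_eq_of_continuousAt
    {K : Type*} [TopologicalSpace K] [CompactSpace K] {E : Type*} [TopologicalSpace E]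
    {u : C(K, ℝ)} {e : E × K → ℝ} {F : E → C(K, ℝ)} (hF : ∀ t x, F t x = u x * e (t, x))
    (hval : ∀ p, e p = 0 ∨ e p = 1) {t₀ : E} (he : Continuous fun x => e (t₀, x))
    (hcont : ContinuousAt F t₀) {x₀ : K} (hx₀ : u x₀ ≠ 0) :
    ∃ U : Set E, ∃ W : Set K, IsOpen U ∧ IsOpen W ∧ t₀ ∈ U ∧ x₀ ∈ W ∧
      ∀ p ∈ U ×ˢ W, e p = e (t₀, x₀) := by
  set δ := |u x₀| / 2
  have hδ : 0 < δ := by positivity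
  obtain ⟨U, hUF, hUopen, ht₀U⟩ := mem_nhds_iff.mp (hcont (ball_mem_nhds (F t₀) hδ))
  refine ⟨U, {x | δ < |u x|} ∩ {x | e (t₀, x) = e (t₀, x₀)}, hUopen,
    (isOpen_lt continuous_const u.continuous.abs).inter
      (isOpen_setOf_eq_of_zero_or_one he (fun x => hval _) x₀),
    ht₀U, ⟨by simp only [mem_ofPred_eq, δ]; linarith [abs_pos.mpr hx₀], rfl⟩, ?_⟩
  rintro ⟨t, x⟩ ⟨ht, hux, hex⟩
  refine Eq.trans (eq_of_abs_sub_lt_one_of_zero_or_one (hval _) (hval _) ?_) hex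
  have hdist : |u x| * |e (t, x) - e (t₀, x)| < |u x| :=
    calc |u x| * |e (t, x) - e (t₀, x)| = dist (F t x) (F t₀ x) := by
          rw [hF, hF, Real.dist_eq, ← mul_sub, abs_mul]
      _ ≤ dist (F t) (F t₀) := ContinuousMap.dist_apply_le_dist x
      _ < δ := hUF ht
      _ < |u x| := hux
  exact (mul_lt_iff_lt_one_right (hδ.trans hux)).mp hdist

theorem multiplication_composed_with_evaluation_nowhere_norm_continuous_general
    {K : Type*} [TopologicalSpace K] [CompactSpace K]
    {E : Type*} [TopologicalSpace E]
    (u : C(K, ℝ)) (hu : u ≠ 0)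
    (e : E × K → ℝ)
    (hval : ∀ p : E × K, e p = 0 ∨ e p = 1)
    (hsep1 : ∀ t : E, Continuous fun x : K => e (t, x))
    (hnc : ∀ U : Set E, ∀ W : Set K, IsOpen U → IsOpen W → U.Nonempty → W.Nonempty →
      ∃ p ∈ U ×ˢ W, ∃ q ∈ U ×ˢ W, e p ≠ e q) :
    ∀ t₀ : E, ¬ ContinuousAt
      (fun t : E => (ContinuousMap.mk (fun x : K => u x * e (t, x))
        (u.continuous.mul (hsep1 t)) : C(K, ℝ))) t₀ := by
  intro t₀ hcont
  obtain ⟨x₀, hx₀⟩ : ∃ x, u x ≠ 0 := by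
    by_contra! h
    exact hu (ContinuousMap.ext h)
  obtain ⟨U, W, hU, hW, ht₀U, hx₀W, hconst⟩ :=
    exists_open_rectangle_eq_of_continuousAt (fun _ _ => rfl) hval (hsep1 t₀) hcont hx₀
  obtain ⟨p, hp, q, hq, hpq⟩ := hnc U W hU hW ⟨t₀, ht₀U⟩ ⟨x₀, hx₀W⟩
  exact hpq ((hconst p hp).trans (hconst q hq).symm)

theorem multiplication_composed_with_evaluation_nowhere_norm_continuous
    {K : Type*} [TopologicalSpace K] [CompactSpace K] [T2Space K]
    {E : Type*} [TopologicalSpace E]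
    (u : C(K, ℝ)) (hu : u ≠ 0)
    (e : E × K → ℝ)
    (hval : ∀ p : E × K, e p = 0 ∨ e p = 1)
    (hsep1 : ∀ t : E, Continuous fun x : K => e (t, x))
    (hsep2 : ∀ x : K, Continuous fun t : E => e (t, x))
    (hnc : ∀ U : Set E, ∀ W : Set K, IsOpen U → IsOpen W → U.Nonempty → W.Nonempty →
      ∃ p ∈ U ×ˢ W, ∃ q ∈ U ×ˢ W, e p ≠ e q) :
    ∀ t₀ : E, ¬ ContinuousAt
      (fun t : E => (ContinuousMap.mk (fun x : K => u x * e (t, x))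
        (u.continuous.mul (hsep1 t)) : C(K, ℝ))) t₀ :=
  multiplication_composed_with_evaluation_nowhere_norm_continuous_general u hu e hval hsep1 hnc
end
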